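/- Let D ≡ 0 or 1 (mod 4) be a non-square integer, d = |D|, and let s₁, s₂ be positive integers with gcd(d·s₁, s₂) = 1 such that the number of prime divisors of s₂ (with multiplicity) with Kronecker symbol (D/q) = -1 is odd. Then M' = d·s₁ + s₂ has a prime divisor q' with (D/q') = -1 and gcd(q', s₁·s₂) = 1; in particular q' ≤ d·s₁ + s₂. -/

import Mathlib

/-!
Extend `kron D` completely multiplicatively to `kronProd D n = (D/n)`. On `n` prime to `D` it
equals `(-1) ^ Ω_D⁻(n)`, and it is periodic modulo `|D|`: for `D ≡ 1 (mod 4)` reciprocity turns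
it into the Jacobi symbol `(n / |D|)`, and for `D = 4a` it is `J(a | n)` on odd `n`, of period
`4|a|`. Since `d s₁ + s₂ ≡ s₂ (mod d)`, the parity of `Ω_D⁻` passes from `s₂` to `d s₁ + s₂`,
which therefore has a prime factor `q` with `(D/q) = -1`; `gcd(d s₁, s₂) = 1` makes `d s₁ + s₂`,
hence `q`, prime to `s₁ s₂`.
-/

open scoped NumberTheorySymbols

/-- Kronecker symbol `(D/q)` at a prime `q`, for discriminants `D ≡ 0,1 (mod 4)`. -/
def kron (D : ℤ) (q : ℕ) : ℤ :=
  if q = 2 then (if D % 8 = 1 then 1 else if D % 8 = 5 then -1 else 0)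
  else jacobiSym D q


/-- `Ω_D⁻(n)`: number of prime divisors of `n`, with multiplicity, lying in `P(D)`. -/
def OmegaMinus (D : ℤ) (n : ℕ) : ℕ :=
  ((n.primeFactorsList).filter (fun q => kron D q = -1)).length

theorem List.prod_map_eq_neg_one_pow {α : Type*} (l : List α) (f : α → ℤ)
    (h : ∀ x ∈ l, f x = 1 ∨ f x = -1) :
    (l.map f).prod = (-1) ^ (l.filter (f · = -1)).length := by
  induction l with
  | nil => simp
  | cons a t ih =>
    rw [List.map_cons, List.prod_cons, ih fun x hx => h x (List.mem_cons_of_mem a hx)]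
    rcases h a List.mem_cons_self with ha | ha <;> simp [ha, pow_succ]

namespace jacobiSym

theorem four_mul_left (a : ℤ) {b : ℕ} (hb : Odd b) : J(4 * a | b) = J(a | b) := by
  have h2 : (2 : ℤ).gcd b = 1 := Nat.coprime_two_left.mpr hb
  rw [mul_left, show (4 : ℤ) = 2 ^ 2 by norm_num, sq_one' h2, one_mul]

theorem mod_natAbs_right_of_four_dvd {a : ℤ} (ha : 4 ∣ a) {b : ℕ} (hb : Odd b) :
    J(a | b) = J(a | b % a.natAbs) := by
  obtain ⟨a, rfl⟩ := ha
  have hb' : Odd (b % (4 * a.natAbs)) := hb.mod_even (Even.mul_right (by decide) _)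
  rw [Int.natAbs_mul, four_mul_left a hb, four_mul_left a (by simpa using hb'), mod_right a hb]
  rfl

theorem quadratic_reciprocity_int_one_mod_four {a : ℤ} (ha : a % 4 = 1) {b : ℕ} (hb : Odd b) :
    J(a | b) = J(b | a.natAbs) := by
  obtain ⟨d, rfl | rfl⟩ := Int.eq_nat_or_neg a
  · rw [Int.natAbs_natCast]
    exact quadratic_reciprocity_one_mod_four (by omega) hb
  · have hd : d % 4 = 3 := by omega
    rw [Int.natAbs_neg, Int.natAbs_natCast, jacobiSym.neg _ hb]
    rcases Nat.odd_mod_four_iff.mp (Nat.odd_iff.mp hb) with hb4 | hb4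
    · rw [ZMod.χ₄_nat_one_mod_four hb4, one_mul,
        quadratic_reciprocity_one_mod_four' (Nat.odd_iff.mpr (by omega)) hb4]
    · rw [ZMod.χ₄_nat_three_mod_four hb4, quadratic_reciprocity_three_mod_four hd hb4, neg_mul_neg,
        one_mul]

end jacobiSym

theorem kron_of_ne_two (D : ℤ) {q : ℕ} (hq : q ≠ 2) : kron D q = J(D | q) := if_neg hq

theorem kron_two_eq_jacobiSym_natAbs {D : ℤ} (hD : D % 4 = 1) : kron D 2 = J(2 | D.natAbs) := by
  have hD8 : D % 8 = 1 ∨ D % 8 = 5 := by omega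
  obtain ⟨d, rfl | rfl⟩ := Int.eq_nat_or_neg D <;>
  · simp only [Int.natAbs_neg, Int.natAbs_natCast] at hD8 ⊢
    rw [kron, if_pos rfl, jacobiSym.at_two (Nat.odd_iff.mpr (by omega)),
      ZMod.χ₈_nat_eq_if_mod_eight]
    have : d % 8 = 1 ∨ d % 8 = 3 ∨ d % 8 = 5 ∨ d % 8 = 7 := by omega
    rcases hD8 with h | h <;> rcases this with h' | h' | h' | h' <;> simp [h, h'] <;> omega

theorem kron_eq_one_or_neg_one {D : ℤ} (hD : D % 4 = 0 ∨ D % 4 = 1) {q : ℕ}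
    (hcop : Nat.Coprime D.natAbs q) : kron D q = 1 ∨ kron D q = -1 := by
  by_cases hq : q = 2
  · subst hq
    have hD8 : D % 8 = 1 ∨ D % 8 = 5 := by
      have := Int.odd_iff.mp (Int.natAbs_odd.mp (Nat.coprime_two_right.mp hcop))
      omega
    rcases hD8 with h | h <;> simp [kron, h]
  · rw [kron_of_ne_two D hq]
    exact jacobiSym.eq_one_or_neg_one hcop

def kronProd (D : ℤ) (n : ℕ) : ℤ :=
  (n.primeFactorsList.map (kron D)).prod

theorem kronProd_eq_neg_one_pow_omegaMinus {D : ℤ} (hD : D % 4 = 0 ∨ D % 4 = 1) {n : ℕ}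
    (hcop : Nat.Coprime D.natAbs n) : kronProd D n = (-1) ^ OmegaMinus D n :=
  List.prod_map_eq_neg_one_pow _ _ fun _ hq =>
    kron_eq_one_or_neg_one hD (hcop.coprime_dvd_right (Nat.dvd_of_mem_primeFactorsList hq))

theorem kronProd_eq_jacobiSym {D : ℤ} {n : ℕ} (hn : Odd n) : kronProd D n = J(D | n) := by
  conv_rhs => rw [← Nat.prod_primeFactorsList hn.pos.ne']
  rw [jacobiSym.list_prod_right fun q hq => (Nat.prime_of_mem_primeFactorsList hq).ne_zero]
  refine congrArg List.prod (List.map_congr_left fun q hq => kron_of_ne_two D ?_)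
  rintro rfl
  exact Nat.not_even_iff_odd.mpr hn (even_iff_two_dvd.mpr (Nat.dvd_of_mem_primeFactorsList hq))

theorem kronProd_eq_jacobiSym_natAbs {D : ℤ} (hD : D % 4 = 1) {n : ℕ} (hn : n ≠ 0) :
    kronProd D n = J(n | D.natAbs) := by
  conv_rhs => rw [← Nat.prod_primeFactorsList hn]
  rw [Nat.cast_list_prod, jacobiSym.list_prod_left, List.map_map]
  refine congrArg List.prod (List.map_congr_left fun q hq => ?_)
  rcases (Nat.prime_of_mem_primeFactorsList hq).eq_two_or_odd' with rfl | hodd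
  · exact kron_two_eq_jacobiSym_natAbs hD
  · rw [kron_of_ne_two D (by rintro rfl; exact absurd hodd (by decide)), Function.comp_apply,
      jacobiSym.quadratic_reciprocity_int_one_mod_four hD hodd]

theorem kronProd_eq_of_modEq {D : ℤ} (hD : D % 4 = 0 ∨ D % 4 = 1) {n n' : ℕ} (hn : n ≠ 0)
    (hn' : n' ≠ 0) (hcop : Nat.Coprime D.natAbs n) (h : n ≡ n' [MOD D.natAbs]) :
    kronProd D n = kronProd D n' := by
  rcases hD with hD0 | hD1
  · have h4 : 4 ∣ D := Int.dvd_of_emod_eq_zero hD0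
    have h2 : 2 ∣ D.natAbs := Int.natAbs_dvd_natAbs.mpr (dvd_trans (by norm_num : (2 : ℤ) ∣ 4) h4)
    have hodd : Odd n := Nat.coprime_two_left.mp (hcop.coprime_dvd_left h2)
    have hodd' : Odd n' := Nat.odd_iff.mpr (Eq.trans (h.of_dvd h2).symm (Nat.odd_iff.mp hodd))
    rw [kronProd_eq_jacobiSym hodd, kronProd_eq_jacobiSym hodd',
      jacobiSym.mod_natAbs_right_of_four_dvd h4 hodd,
      jacobiSym.mod_natAbs_right_of_four_dvd h4 hodd', h]
  · rw [kronProd_eq_jacobiSym_natAbs hD1 hn, kronProd_eq_jacobiSym_natAbs hD1 hn']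
    exact jacobiSym.mod_left' (by rw [← Int.natCast_mod, ← Int.natCast_mod, h])

theorem odd_omegaMinus_of_modEq {D : ℤ} (hD : D % 4 = 0 ∨ D % 4 = 1) {n n' : ℕ} (hn : n ≠ 0)
    (hn' : n' ≠ 0) (hcop : Nat.Coprime D.natAbs n) (h : n ≡ n' [MOD D.natAbs])
    (hodd : Odd (OmegaMinus D n)) : Odd (OmegaMinus D n') := by
  have hcop' : Nat.Coprime D.natAbs n' := by
    rw [Nat.Coprime, Nat.gcd_comm, ← h.gcd_eq, Nat.gcd_comm]; exact hcop
  rw [← neg_one_pow_eq_neg_one_iff_odd (R := ℤ) (by decide)] at hodd ⊢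
  rw [← kronProd_eq_neg_one_pow_omegaMinus hD hcop', ← kronProd_eq_of_modEq hD hn hn' hcop h,
    kronProd_eq_neg_one_pow_omegaMinus hD hcop, hodd]

theorem exists_prime_dvd_kron_eq_neg_one {D : ℤ} {n : ℕ} (h : OmegaMinus D n ≠ 0) :
    ∃ q, q.Prime ∧ q ∣ n ∧ kron D q = -1 := by
  obtain ⟨q, hq⟩ := List.exists_mem_of_length_pos (Nat.pos_of_ne_zero h)
  rw [List.mem_filter, decide_eq_true_iff] at hq
  exact ⟨q, Nat.prime_of_mem_primeFactorsList hq.1, Nat.dvd_of_mem_primeFactorsList hq.1, hq.2⟩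

theorem Nat.Coprime.add_coprime_mul {a b : ℕ} (h : Nat.Coprime a b) :
    Nat.Coprime (a + b) (a * b) :=
  (Nat.coprime_self_add_left.mpr h.symm).mul_right (Nat.coprime_add_self_left.mpr h)

theorem stmt5_general (D : ℤ) (hD : D % 4 = 0 ∨ D % 4 = 1)
    (d : ℕ) (hd : d = D.natAbs) (s₁ s₂ : ℕ)
    (hgcd : Nat.gcd (d * s₁) s₂ = 1) (hodd : Odd (OmegaMinus D s₂)) :
    ∃ q : ℕ, q.Prime ∧ kron D q = -1 ∧ q ∣ (d * s₁ + s₂) ∧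
      Nat.gcd q (s₁ * s₂) = 1 ∧ q ≤ d * s₁ + s₂ := by
  subst hd
  have hs₂ : s₂ ≠ 0 := by rintro rfl; simp [OmegaMinus] at hodd
  have hM : Odd (OmegaMinus D (D.natAbs * s₁ + s₂)) :=
    odd_omegaMinus_of_modEq hD hs₂ (by omega)
      (Nat.Coprime.coprime_dvd_left (dvd_mul_right _ _) hgcd) (by simp [Nat.ModEq]) hodd
  obtain ⟨q, hq, hqM, hqk⟩ := exists_prime_dvd_kron_eq_neg_one hM.pos.ne'
  have hcopM : Nat.Coprime (D.natAbs * s₁ + s₂) (s₁ * s₂) :=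
    (Nat.Coprime.add_coprime_mul hgcd).coprime_dvd_right (mul_dvd_mul_right (dvd_mul_left _ _) _)
  exact ⟨q, hq, hqk, hqM, hcopM.coprime_dvd_left hqM, Nat.le_of_dvd (by omega) hqM⟩

theorem stmt5 (D : ℤ) (hD : D % 4 = 0 ∨ D % 4 = 1) (hns : ¬ IsSquare D)
    (d : ℕ) (hd : d = D.natAbs) (s₁ s₂ : ℕ) (hs₁ : 0 < s₁) (hs₂ : 0 < s₂)
    (hgcd : Nat.gcd (d * s₁) s₂ = 1) (hodd : Odd (OmegaMinus D s₂)) :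
    ∃ q : ℕ, q.Prime ∧ kron D q = -1 ∧ q ∣ (d * s₁ + s₂) ∧
      Nat.gcd q (s₁ * s₂) = 1 ∧ q ≤ d * s₁ + s₂ :=
  stmt5_general D hD d hd s₁ s₂ hgcd hodd
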